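/- Let g : ℝⁿ → ℝᵐ be continuously differentiable with each component gᵢ convex, let Ω = {x ∈ ℝⁿ : gᵢ(x) ≤ 0 for all i ∈ {1,…,m}}, let δ ∈ (0,1), and fix an index î ∈ {1,…,m}. Let {x_k} ⊆ Ω, {d_k}, {s_k} ⊆ ℝⁿ be sequences converging respectively to x̄, d̄, s̄ ∈ ℝⁿ, and for each k define γ_k(t) = x_k + t·d_k + t²·(s_k − d_k). Suppose that for every q ∈ ℕ and every k, g_î(γ_k(δ^q)) > 0. Then: g_î(x̄) = 0, ∇g_î(x̄)ᵀd̄ ≥ 0, and consequently g_î(x̄ + t̃·d̄) ≥ 0 for every t̃ > 0. -/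

import Mathlib

open Filter Topology

/-!
Passing to the limit `k → ∞` in the violations gives `g_î(γ̄(δ^q)) ≥ 0` for the limit curve
`γ̄(t) = x̄ + t d̄ + t² (s̄ - d̄)`, and letting `q → ∞` gives `g_î(x̄) ≥ 0`; with `g_î(x̄) ≤ 0`
(closedness of `Ω`) this is `g_î(x̄) = 0`. Then the difference quotients
`g_î(γ̄(δ^q)) / δ^q` are nonnegative and tend to `(g_î ∘ γ̄)'(0) = ∇g_î(x̄)ᵀd̄`, since `γ̄'(0) = d̄`.
Finally the gradient inequality of the convex `g_î` gives
`g_î(x̄ + t̃ d̄) ≥ g_î(x̄) + t̃ ∇g_î(x̄)ᵀd̄ ≥ 0`.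
-/

section

variable {E : Type*} [NormedAddCommGroup E] [NormedSpace ℝ E]

def quadCurve (x d s : E) (t : ℝ) : E := x + t • d + t ^ 2 • (s - d)

@[simp]
lemma quadCurve_zero (x d s : E) : quadCurve x d s 0 = x := by
  simp [quadCurve]

lemma Filter.Tendsto.quadCurve {α : Type*} {l : Filter α} {x d s : α → E} {t : α → ℝ}
    {x₀ d₀ s₀ : E} {t₀ : ℝ} (hx : Tendsto x l (𝓝 x₀)) (hd : Tendsto d l (𝓝 d₀))
    (hs : Tendsto s l (𝓝 s₀)) (ht : Tendsto t l (𝓝 t₀)) :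
    Tendsto (fun a => _root_.quadCurve (x a) (d a) (s a) (t a)) l
      (𝓝 (_root_.quadCurve x₀ d₀ s₀ t₀)) :=
  (hx.add (ht.smul hd)).add ((ht.pow 2).smul (hs.sub hd))

lemma hasDerivAt_quadCurve_zero (x d s : E) : HasDerivAt (quadCurve x d s) d 0 := by
  have h : HasDerivAt (quadCurve x d s) (0 + (1 : ℝ) • d + ((2 : ℕ) * 0 ^ 1 : ℝ) • (s - d)) 0 :=
    ((hasDerivAt_const 0 x).add ((hasDerivAt_id 0).smul_const d)).add
      ((hasDerivAt_pow 2 0).smul_const (s - d))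
  simpa using h

lemma ConvexOn.add_fderiv_le {f : E → ℝ} {f' : E →L[ℝ] ℝ} {x : E}
    (hfc : ConvexOn ℝ Set.univ f) (hf : HasFDerivAt f f' x) (y : E) :
    f x + f' (y - x) ≤ f y := by
  have hline : ConvexOn ℝ Set.univ (f ∘ AffineMap.lineMap (k := ℝ) x y) := by
    simpa using hfc.comp_affineMap (AffineMap.lineMap x y)
  have hderiv : HasDerivAt (f ∘ AffineMap.lineMap (k := ℝ) x y) (f' (y - x)) 0 :=
    hf.comp_hasDerivAt_of_eq 0 AffineMap.hasDerivAt_lineMap (AffineMap.lineMap_apply_zero x y).symm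
  have hslope := hline.le_slope_of_hasDerivAt (Set.mem_univ 0) (Set.mem_univ 1) one_pos hderiv
  simp only [slope_def_field, Function.comp_apply, AffineMap.lineMap_apply_zero,
    AffineMap.lineMap_apply_one, sub_zero, div_one] at hslope
  linarith

end

lemma HasDerivAt.nonneg_of_frequently_le {f : ℝ → ℝ} {f' a : ℝ} (hf : HasDerivAt f f' a)
    (hfreq : ∃ᶠ t in 𝓝[>] a, f a ≤ f t) : 0 ≤ f' := by
  refine isClosed_Ici.mem_of_frequently_of_tendsto ?_
    (hasDerivAt_iff_tendsto_slope.mp hf |>.mono_left (nhdsGT_le_nhdsNE a))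
  refine (hfreq.and_eventually self_mem_nhdsWithin).mono fun t ⟨hle, hat⟩ => ?_
  rw [Set.mem_Ici, slope_def_field]
  exact div_nonneg (sub_nonneg.mpr hle) (sub_nonneg.mpr hat.le)

/-- if along convergent sequences `x_k → x̄` (with `x_k ∈ Ω`), `d_k → d̄`,
`s_k → s̄` the quadratic curves violate the convex constraint `g_î` at every stepsize `δ^q`,
then `g_î(x̄) = 0`, `∇g_î(x̄)ᵀd̄ ≥ 0`, and consequently `g_î(x̄ + t̃·d̄) ≥ 0` for every
`t̃ > 0`. -/
theorem stmt_14 {n m : ℕ} (g : EuclideanSpace ℝ (Fin n) → Fin m → ℝ)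
    (hg_smooth : ∀ i, ContDiff ℝ 1 (fun y => g y i))
    (hg_conv : ∀ i, ConvexOn ℝ Set.univ (fun y => g y i))
    (δ : ℝ) (hδ : δ ∈ Set.Ioo (0 : ℝ) 1)
    (ihat : Fin m)
    (x d s : ℕ → EuclideanSpace ℝ (Fin n))
    (hxΩ : ∀ k, ∀ i, g (x k) i ≤ 0)
    (xbar dbar sbar : EuclideanSpace ℝ (Fin n))
    (hx : Filter.Tendsto x Filter.atTop (nhds xbar))
    (hd : Filter.Tendsto d Filter.atTop (nhds dbar))
    (hs : Filter.Tendsto s Filter.atTop (nhds sbar))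
    (hviol : ∀ q k : ℕ,
      0 < g (x k + (δ ^ q) • d k + (δ ^ q) ^ 2 • (s k - d k)) ihat) :
    g xbar ihat = 0 ∧
    0 ≤ fderiv ℝ (fun y => g y ihat) xbar dbar ∧
    ∀ ttil : ℝ, 0 < ttil → 0 ≤ g (xbar + ttil • dbar) ihat := by
  set G := fun y => g y ihat
  have hGc : Continuous G := (hg_smooth ihat).continuous
  have hG' : HasFDerivAt G (fderiv ℝ G xbar) xbar :=
    ((hg_smooth ihat).differentiable one_ne_zero xbar).hasFDerivAt
  have hsteps : Tendsto (δ ^ ·) atTop (𝓝[>] 0) :=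
    tendsto_pow_atTop_nhdsWithin_zero_of_lt_one hδ.1 hδ.2
  have hcurve (q : ℕ) : 0 ≤ G (quadCurve xbar dbar sbar (δ ^ q)) :=
    ge_of_tendsto' ((hGc.tendsto _).comp (hx.quadCurve hd hs tendsto_const_nhds))
      fun k => (hviol q k).le
  have hG0 : G xbar = 0 := by
    refine le_antisymm (le_of_tendsto' ((hGc.tendsto _).comp hx) fun k => hxΩ k ihat) ?_
    have hlim : Tendsto (fun q : ℕ => quadCurve xbar dbar sbar (δ ^ q)) atTop
        (𝓝 (quadCurve xbar dbar sbar 0)) :=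
      tendsto_const_nhds.quadCurve tendsto_const_nhds tendsto_const_nhds
        (tendsto_nhdsWithin_iff.mp hsteps).1
    rw [quadCurve_zero] at hlim
    exact ge_of_tendsto' ((hGc.tendsto _).comp hlim) hcurve
  have hL : 0 ≤ fderiv ℝ G xbar dbar := by
    refine (hG'.comp_hasDerivAt_of_eq 0 (hasDerivAt_quadCurve_zero xbar dbar sbar)
      (quadCurve_zero _ _ _).symm).nonneg_of_frequently_le ?_
    refine hsteps.frequently (Frequently.of_forall fun q => ?_)
    simpa [hG0] using hcurve q
  refine ⟨hG0, hL, fun t ht => ?_⟩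
  have hgrad : G xbar + fderiv ℝ G xbar (xbar + t • dbar - xbar) ≤ G (xbar + t • dbar) :=
    (hg_conv ihat).add_fderiv_le hG' _
  rw [hG0, add_sub_cancel_left, map_smul, smul_eq_mul, zero_add] at hgrad
  exact (mul_nonneg ht.le hL).trans hgrad
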